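/- arXiv:1807.03826 — 4 statements merged into one kernel-verified Lean document; each statement's English description precedes it below -/
import Mathlib

section
/- Let 𝒜 be a bounded linear operator acting on BUC(ℝ,X) that commutes with the translation operator S. Then σ(𝒜g) ⊂ σ(g) for every g ∈ BUC(ℝ,X). -/
open Set MeasureTheory intervalIntegral
open scoped BoundedContinuousFunction ZeroAtInfty

noncomputable section

/-- The translation operator `S` on `BC(ℝ, X)`: `(S g)(t) = g (t + 1)`.
It is an invertible isometry of the space of bounded continuous functions. -/
def transOp (X : Type*) [NormedAddCommGroup X] [NormedSpace ℂ X] :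
    (ℝ →ᵇ X) →L[ℂ] (ℝ →ᵇ X) :=
  LinearMap.mkContinuous
    { toFun := fun g => g.compContinuous ⟨fun t : ℝ => t + 1, by continuity⟩
      map_add' := by intro g h; ext t; simp
      map_smul' := by intro c g; ext t; simp }
    1 (fun g => by
      simpa using g.norm_compContinuous_le ⟨fun t : ℝ => t + 1, by continuity⟩)

/-- The circular spectrum of `g ∈ BC(ℝ, X)`: the set of points `ξ₀` of the unit circle
`Γ = {z : ‖z‖ = 1}` such that the analytic function `λ ↦ R(λ, S) g` on `ℂ \ Γ`
admits no analytic extension to any neighborhood of `ξ₀`. -/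
def circularSpectrum {X : Type*} [NormedAddCommGroup X] [NormedSpace ℂ X]
    (g : ℝ →ᵇ X) : Set ℂ :=
  {ξ : ℂ | ‖ξ‖ = 1 ∧
    ¬ ∃ U : Set ℂ, IsOpen U ∧ ξ ∈ U ∧ ∃ H : ℂ → (ℝ →ᵇ X),
      AnalyticOnNhd ℂ H U ∧ ∀ z ∈ U, ‖z‖ ≠ 1 → H z = resolvent (transOp X) z g}

/-- The subspace `BUC(ℝ, X)` of bounded uniformly continuous functions, as a submodule
of `BC(ℝ, X)`. -/
def BUCsub (X : Type*) [NormedAddCommGroup X] [NormedSpace ℂ X] :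
    Submodule ℂ (ℝ →ᵇ X) where
  carrier := {g : ℝ →ᵇ X | UniformContinuous ⇑g}
  add_mem' := by
    intro g h hg hh
    rw [Set.mem_ofPred_eq, BoundedContinuousFunction.coe_add]
    exact hg.add hh
  zero_mem' := by
    rw [Set.mem_ofPred_eq, BoundedContinuousFunction.coe_zero]
    exact uniformContinuous_const
  smul_mem' := by
    intro c g hg
    rw [Set.mem_ofPred_eq, BoundedContinuousFunction.coe_smul]
    exact hg.const_smul c


/-! Off the unit circle the resolvent of `S` leaves `BUC(ℝ, X)` invariant and agrees there with
the resolvent of the restriction of `S`, which commutes with `𝒜`; hence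
`R(λ, S) (𝒜 g) = 𝒜 (R(λ, S) g)` for `|λ| ≠ 1`. An analytic extension `H` of `R(·, S) g` near `ξ`
still takes its values in the closed subspace `BUC(ℝ, X)`, because the circle has empty interior,
so it is analytic as a `BUC(ℝ, X)`-valued map and `𝒜 ∘ H` extends `R(·, S) (𝒜 g)`. -/

open Topology Filter

theorem Commute.ringInverse_right {M₀ : Type*} [MonoidWithZero M₀] {a b : M₀}
    (h : Commute a b) : Commute a (Ring.inverse b) := by
  by_cases hb : IsUnit b
  · obtain ⟨u, rfl⟩ := hb
    rw [Ring.inverse_unit]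
    exact h.units_inv_right
  · rw [Ring.inverse_non_unit b hb]
    exact Commute.zero_right a

theorem Commute.resolvent_right {R A : Type*} [CommSemiring R] [Ring A] [Algebra R A] {a b : A}
    (h : Commute a b) (z : R) : Commute a (resolvent b z) :=
  ((Algebra.commute_algebraMap_left z a).symm.sub_right h).ringInverse_right

theorem spectrum_subset_sphere_of_norm_le_one {𝕜 A : Type*} [NormedField 𝕜] [NormedRing A]
    [NormedAlgebra 𝕜 A] [CompleteSpace A] (h1 : ‖(1 : A)‖ ≤ 1) (u : Aˣ) (hu : ‖(u : A)‖ ≤ 1)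
    (hu' : ‖(↑u⁻¹ : A)‖ ≤ 1) : spectrum 𝕜 (u : A) ⊆ Metric.sphere 0 1 := by
  intro k hk
  have hk0 : k ≠ 0 := by
    rintro rfl
    exact (spectrum.zero_notMem_iff 𝕜).2 u.isUnit hk
  have hk_inv : k⁻¹ ∈ spectrum 𝕜 (↑u⁻¹ : A) := by
    rw [← spectrum.map_inv]
    exact Set.inv_mem_inv.2 hk
  have hle : ‖k‖ ≤ 1 :=
    (spectrum.norm_le_norm_mul_of_mem hk).trans (mul_le_one₀ hu (norm_nonneg _) h1)
  have hle_inv : ‖k‖⁻¹ ≤ 1 := by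
    simpa using
      (spectrum.norm_le_norm_mul_of_mem hk_inv).trans (mul_le_one₀ hu' (norm_nonneg _) h1)
  exact mem_sphere_zero_iff_norm.2 (le_antisymm hle ((inv_le_one₀ (norm_pos_iff.2 hk0)).1 hle_inv))

theorem ContinuousOn.mapsTo_of_dense_inter {α β : Type*} [TopologicalSpace α] [TopologicalSpace β]
    {f : α → β} {U D : Set α} {C : Set β} (hf : ContinuousOn f U) (hU : IsOpen U) (hD : Dense D)
    (hC : IsClosed C) (h : MapsTo f (U ∩ D) C) : MapsTo f U C := fun z hz =>
  hC.closure_subset_iff.2 h.image_subset <|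
    ((hf z hz).mono inter_subset_left).mem_closure_image (hD.open_subset_closure_inter hU hz)

section Restriction

variable {𝕜 E : Type*} [NontriviallyNormedField 𝕜] [NormedAddCommGroup E] [NormedSpace 𝕜 E]
  {p : Submodule 𝕜 E}

theorem ContinuousLinearMap.norm_le_of_coe_apply {T : E →L[𝕜] E} {T' : p →L[𝕜] p}
    (hT : ∀ x, (T' x : E) = T x) : ‖T'‖ ≤ ‖T‖ :=
  T'.opNorm_le_bound (norm_nonneg _) fun x => by
    rw [← Submodule.norm_coe, hT, ← Submodule.norm_coe x]
    exact T.le_opNorm x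

theorem resolvent_coe_eq_coe_resolvent {T : E →L[𝕜] E} {T' : p →L[𝕜] p}
    (hT : ∀ x, (T' x : E) = T x) {z : 𝕜} (hz : z ∉ spectrum 𝕜 T)
    (hz' : z ∉ spectrum 𝕜 T') (x : p) : resolvent T z (x : E) = resolvent T' z x := by
  have hcoe : ∀ y : p, ((algebraMap 𝕜 _ z - T') y : E) = (algebraMap 𝕜 _ z - T) y := by
    intro y
    simp [Algebra.algebraMap_eq_smul_one, hT]
  have h_right : (algebraMap 𝕜 _ z - T') (resolvent T' z x) = x := by
    rw [resolvent, ← mul_apply_eq_comp, Ring.mul_inverse_cancel _ (spectrum.notMem_iff.1 hz'),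
      one_apply_eq_self]
  have h_left : ∀ y, resolvent T z ((algebraMap 𝕜 _ z - T) y) = y := fun y => by
    rw [resolvent, ← mul_apply_eq_comp, Ring.inverse_mul_cancel _ (spectrum.notMem_iff.1 hz),
      one_apply_eq_self]
  rw [← h_left (resolvent T' z x : E), ← hcoe, h_right]

theorem Submodule.mem_of_hasDerivAt (hp : IsClosed (p : Set E)) {f : 𝕜 → E} {d : E} {z : 𝕜}
    (hf : HasDerivAt f d z) (hfp : ∀ᶠ w in 𝓝 z, f w ∈ p) : d ∈ p := by
  refine hp.mem_of_tendsto (hasDerivAt_iff_tendsto_slope.1 hf) ?_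
  filter_upwards [nhdsWithin_le_nhds hfp] with w hw
  exact p.smul_mem _ (p.sub_mem hw hfp.self_of_nhds)

theorem Submodule.hasDerivAt_of_hasDerivAt_coe {K : 𝕜 → p} {d : p} {z : 𝕜}
    (h : HasDerivAt (fun w => (K w : E)) d z) : HasDerivAt K d z := by
  rw [hasDerivAt_iff_isLittleO, ← Asymptotics.isLittleO_norm_left] at h ⊢
  simpa only [← Submodule.norm_coe, Submodule.coe_sub, Submodule.coe_smul] using h

end Restriction

theorem Submodule.exists_analyticOnNhd_lift {E : Type*} [NormedAddCommGroup E] [NormedSpace ℂ E]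
    [CompleteSpace E] {p : Submodule ℂ E} (hp : IsClosed (p : Set E)) {f : ℂ → E} {U : Set ℂ}
    (hU : IsOpen U) (hf : AnalyticOnNhd ℂ f U) (hfp : MapsTo f U p) :
    ∃ K : ℂ → p, AnalyticOnNhd ℂ K U ∧ ∀ z ∈ U, (K z : E) = f z := by
  classical
  have : CompleteSpace p := hp.completeSpace_coe
  set K : ℂ → p := fun w => if hw : f w ∈ p then ⟨f w, hw⟩ else 0
  have hK : ∀ z ∈ U, (K z : E) = f z := fun z hz => by simp [K, show f z ∈ p from hfp hz]
  refine ⟨K, DifferentiableOn.analyticOnNhd (fun z hz => ?_) hU, hK⟩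
  have hfp_nhds : ∀ᶠ w in 𝓝 z, f w ∈ p := eventually_of_mem (hU.mem_nhds hz) fun _ => (hfp ·)
  have hKf : (fun w => (K w : E)) =ᶠ[𝓝 z] f := eventually_of_mem (hU.mem_nhds hz) hK
  have hd := (hf z hz).differentiableAt.hasDerivAt
  have hd_mem : deriv f z ∈ p := p.mem_of_hasDerivAt hp hd hfp_nhds
  exact (Submodule.hasDerivAt_of_hasDerivAt_coe (d := ⟨_, hd_mem⟩)
    (hd.congr_of_eventuallyEq hKf)).differentiableAt.differentiableWithinAt

section Translation

variable {X : Type*} [NormedAddCommGroup X] [NormedSpace ℂ X]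

variable (X) in
def translationOp (a : ℝ) : (ℝ →ᵇ X) →L[ℂ] (ℝ →ᵇ X) :=
  LinearMap.mkContinuous
    { toFun := fun g => g.compContinuous ⟨fun t : ℝ => t + a, by continuity⟩
      map_add' := by intro g h; ext t; simp
      map_smul' := by intro c g; ext t; simp }
    1 (fun g => by
      simpa using g.norm_compContinuous_le ⟨fun t : ℝ => t + a, by continuity⟩)

theorem translationOp_apply (a : ℝ) (g : ℝ →ᵇ X) (t : ℝ) :
    translationOp X a g t = g (t + a) :=
  rfl

theorem transOp_eq_translationOp_one : transOp X = translationOp X 1 := rfl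

theorem translationOp_translationOp (a b : ℝ) (g : ℝ →ᵇ X) :
    translationOp X a (translationOp X b g) = translationOp X (a + b) g := by
  ext t
  simp only [translationOp_apply, add_assoc]

theorem translationOp_zero_apply (g : ℝ →ᵇ X) : translationOp X 0 g = g := by
  ext t
  simp only [translationOp_apply, add_zero]

theorem norm_translationOp_le (a : ℝ) : ‖translationOp X a‖ ≤ 1 :=
  LinearMap.mkContinuous_norm_le _ zero_le_one _

theorem spectrum_translationOp_subset_sphere [CompleteSpace X] (a : ℝ) :
    spectrum ℂ (translationOp X a) ⊆ Metric.sphere 0 1 := by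
  have h1 : translationOp X a * translationOp X (-a) = 1 := by
    ext1 g
    rw [mul_apply_eq_comp, translationOp_translationOp, add_neg_cancel, translationOp_zero_apply,
      one_apply_eq_self]
  have h2 : translationOp X (-a) * translationOp X a = 1 := by
    ext1 g
    rw [mul_apply_eq_comp, translationOp_translationOp, neg_add_cancel, translationOp_zero_apply,
      one_apply_eq_self]
  exact spectrum_subset_sphere_of_norm_le_one ContinuousLinearMap.norm_id_le ⟨_, _, h1, h2⟩
    (norm_translationOp_le a) (norm_translationOp_le (-a))

theorem isClosed_BUCsub : IsClosed (BUCsub X : Set (ℝ →ᵇ X)) :=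
  isClosed_iff_frequently.2 fun _ hg =>
    (BoundedContinuousFunction.tendsto_iff_tendstoUniformly.1 tendsto_id).uniformContinuous hg

instance [CompleteSpace X] : CompleteSpace (BUCsub X) := isClosed_BUCsub.completeSpace_coe

theorem translationOp_mem_BUCsub (a : ℝ) : ∀ g ∈ BUCsub X, translationOp X a g ∈ BUCsub X :=
  fun _ hg => UniformContinuous.comp hg (uniformContinuous_id.add uniformContinuous_const)

theorem spectrum_subset_sphere_of_coe_apply_eq_translationOp [CompleteSpace X] {a : ℝ}
    {T : BUCsub X →L[ℂ] BUCsub X} (hT : ∀ g, (T g : ℝ →ᵇ X) = translationOp X a g) :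
    spectrum ℂ T ⊆ Metric.sphere 0 1 := by
  let T' : BUCsub X →L[ℂ] BUCsub X :=
    (translationOp X (-a)).restrict (translationOp_mem_BUCsub (-a))
  have hT' : ∀ g, (T' g : ℝ →ᵇ X) = translationOp X (-a) g := fun _ => rfl
  have h1 : T * T' = 1 := by
    ext1 g
    apply Subtype.ext
    rw [mul_apply_eq_comp, hT, hT', translationOp_translationOp, add_neg_cancel,
      translationOp_zero_apply, one_apply_eq_self]
  have h2 : T' * T = 1 := by
    ext1 g
    apply Subtype.ext
    rw [mul_apply_eq_comp, hT', hT, translationOp_translationOp, neg_add_cancel,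
      translationOp_zero_apply, one_apply_eq_self]
  exact spectrum_subset_sphere_of_norm_le_one (𝕜 := ℂ) ContinuousLinearMap.norm_id_le
    ⟨T, T', h1, h2⟩
    ((ContinuousLinearMap.norm_le_of_coe_apply hT).trans (norm_translationOp_le a))
    ((ContinuousLinearMap.norm_le_of_coe_apply hT').trans (norm_translationOp_le (-a)))

end Translation

/-- For a bounded linear operator `𝒜` on `BUC(ℝ, X)` commuting with the translation
operator `S`, one has `σ(𝒜 g) ⊆ σ(g)` for all `g ∈ BUC(ℝ, X)`. -/
theorem circularSpectrum_comm_operator_subset {X : Type*} [NormedAddCommGroup X] [NormedSpace ℂ X] [CompleteSpace X]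
    (A : BUCsub X →L[ℂ] BUCsub X) (SB : BUCsub X →L[ℂ] BUCsub X)
    (hSB : ∀ g : BUCsub X, (SB g : ℝ →ᵇ X) = transOp X (g : ℝ →ᵇ X))
    (hcomm : A.comp SB = SB.comp A) :
    ∀ g : BUCsub X, circularSpectrum ((A g : ℝ →ᵇ X)) ⊆ circularSpectrum (g : ℝ →ᵇ X) := by
  intro g ξ ⟨hξ, hξ_ext⟩
  refine ⟨hξ, fun ⟨U, hU, hξU, H, hH, hHres⟩ => hξ_ext ?_⟩
  have hS : spectrum ℂ (transOp X) ⊆ Metric.sphere 0 1 := by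
    rw [transOp_eq_translationOp_one]
    exact spectrum_translationOp_subset_sphere 1
  have hSB_sphere : spectrum ℂ SB ⊆ Metric.sphere 0 1 :=
    spectrum_subset_sphere_of_coe_apply_eq_translationOp hSB
  have hres : ∀ z : ℂ, ‖z‖ ≠ 1 → ∀ x : BUCsub X,
      resolvent (transOp X) z (x : ℝ →ᵇ X) = resolvent SB z x := fun z hz =>
    resolvent_coe_eq_coe_resolvent hSB (fun h => hz (by simpa using hS h))
      (fun h => hz (by simpa using hSB_sphere h))
  have hH_mem : MapsTo H U (BUCsub X) :=
    hH.continuousOn.mapsTo_of_dense_inter hU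
      (interior_eq_empty_iff_dense_compl.1 (interior_sphere (0 : ℂ) one_ne_zero)) isClosed_BUCsub
      fun z ⟨hzU, hz⟩ => by
        have hz1 : ‖z‖ ≠ 1 := by simpa using hz
        rw [SetLike.mem_coe, hHres z hzU hz1, hres z hz1 g]
        exact SetLike.coe_mem _
  obtain ⟨K, hK, hKH⟩ := (BUCsub X).exists_analyticOnNhd_lift isClosed_BUCsub hU hH hH_mem
  refine ⟨U, hU, hξU, fun w => A (K w), ((BUCsub X).subtypeL.comp A).comp_analyticOnNhd hK,
    fun w hw hw1 => ?_⟩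
  have hKw : K w = resolvent SB w g :=
    Subtype.ext ((hKH w hw).trans ((hHres w hw hw1).trans (hres w hw1 g)))
  have hcomm' : Commute A SB := hcomm
  dsimp only
  rw [hres w hw1, hKw, ← mul_apply_eq_comp, (hcomm'.resolvent_right w).eq, mul_apply_eq_comp]
end
end

section
/- If g ∈ BC(ℝ,X) and the circular spectrum σ(g) is empty, then g = 0. -/
open Set MeasureTheory intervalIntegral
open scoped BoundedContinuousFunction ZeroAtInfty

noncomputable section

/-! The translation `S` is an invertible isometry, so its spectrum lies on the unit circle `Γ`.
If `σ(g) = ∅`, the local analytic extensions of `λ ↦ R(λ, S) g` across `Γ` glue (they agree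
off the nowhere dense set `Γ`) into an entire function, which tends to `0` at infinity like
the resolvent does. By Liouville it vanishes, so `R(λ, S) g = 0` for some `λ ∉ Γ`, and
`g = 0` because `R(λ, S)` is invertible. -/

theorem LinearIsometryEquiv.spectrum_subset_sphere {𝕜 E : Type*} [NontriviallyNormedField 𝕜]
    [NormedAddCommGroup E] [NormedSpace 𝕜 E] [CompleteSpace E] (e : E ≃ₗᵢ[𝕜] E) :
    spectrum 𝕜 (e.toContinuousLinearEquiv : E →L[𝕜] E) ⊆ Metric.sphere 0 1 := by
  intro k hk
  have norm_one_le : ‖(1 : E →L[𝕜] E)‖ ≤ 1 := ContinuousLinearMap.norm_id_le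
  have norm_le_one (f : E ≃ₗᵢ[𝕜] E) {c : 𝕜}
      (hc : c ∈ spectrum 𝕜 (f.toContinuousLinearEquiv : E →L[𝕜] E)) : ‖c‖ ≤ 1 :=
    (spectrum.norm_le_norm_mul_of_mem hc).trans <|
      mul_le_one₀ f.toLinearIsometry.norm_toContinuousLinearMap_le (norm_nonneg _) norm_one_le
  let u := e.toContinuousLinearEquiv.toUnit
  have hk0 : k ≠ 0 := by
    rintro rfl
    exact (spectrum.zero_mem_iff 𝕜).mp hk u.isUnit
  have hk_inv : k⁻¹ ∈ spectrum 𝕜 (e.symm.toContinuousLinearEquiv : E →L[𝕜] E) :=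
    (spectrum.inv_mem_iff (r := Units.mk0 k hk0) (a := u)).mp hk
  have one_le_norm := norm_le_one e.symm hk_inv
  rw [norm_inv, inv_le_one₀ (norm_pos_iff.mpr hk0)] at one_le_norm
  exact mem_sphere_zero_iff_norm.mpr (le_antisymm (norm_le_one e hk) one_le_norm)

section Translation

variable (X : Type*) [NormedAddCommGroup X] [NormedSpace ℂ X]

theorem transOp_apply (g : ℝ →ᵇ X) (t : ℝ) : transOp X g t = g (t + 1) := rfl

theorem norm_transOp_apply (g : ℝ →ᵇ X) : ‖transOp X g‖ = ‖g‖ := by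
  refine le_antisymm (g.norm_compContinuous_le ⟨fun t : ℝ => t + 1, by fun_prop⟩) ?_
  have hg : (transOp X g).compContinuous ⟨fun t : ℝ => t - 1, by fun_prop⟩ = g := by
    ext t; simp [transOp_apply]
  simpa [hg] using (transOp X g).norm_compContinuous_le ⟨fun t : ℝ => t - 1, by fun_prop⟩

theorem transOp_surjective : Function.Surjective (transOp X) := fun g =>
  ⟨g.compContinuous ⟨fun t : ℝ => t - 1, by fun_prop⟩, by ext t; simp [transOp_apply]⟩

def transIsometry : (ℝ →ᵇ X) ≃ₗᵢ[ℂ] (ℝ →ᵇ X) :=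
  .ofSurjective ⟨(transOp X).toLinearMap, norm_transOp_apply X⟩ (transOp_surjective X)

theorem spectrum_transOp_subset_sphere [CompleteSpace X] :
    spectrum ℂ (transOp X) ⊆ Metric.sphere 0 1 :=
  (transIsometry X).spectrum_subset_sphere

end Translation

section Gluing

variable {𝕜 V E : Type*} [NontriviallyNormedField 𝕜] [NormedAddCommGroup V] [NormedSpace 𝕜 V]
  [NormedAddCommGroup E] [NormedSpace 𝕜 E] {K : Set V}

theorem eqOn_of_eqOn_diff_of_dense_compl (hK : Dense Kᶜ) {W : Set V} (hW : IsOpen W)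
    {F G : V → E} (hF : ContinuousOn F W) (hG : ContinuousOn G W) (hFG : EqOn F G (W \ K)) :
    EqOn F G W :=
  hFG.of_subset_closure hF hG sdiff_subset (hK.open_subset_closure_inter hW)

theorem exists_differentiable_eqOn_compl_of_local_extensions (hK : IsClosed K) (hKd : Dense Kᶜ)
    {f : V → E} (hf : DifferentiableOn 𝕜 f Kᶜ)
    (hext : ∀ ξ ∈ K, ∃ U : Set V, IsOpen U ∧ ξ ∈ U ∧
      ∃ H : V → E, DifferentiableOn 𝕜 H U ∧ EqOn H f (U \ K)) :
    ∃ F : V → E, Differentiable 𝕜 F ∧ EqOn F f Kᶜ := by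
  classical
  choose U hU hξU H hH hHf using hext
  let F : V → E := fun z => if hz : z ∈ K then H z hz z else f z
  have hF_off : EqOn F f Kᶜ := fun z hz => dif_neg hz
  have hF_near (ξ : V) (hξ : ξ ∈ K) : EqOn F (H ξ hξ) (U ξ hξ) := by
    intro z hz
    by_cases hzK : z ∈ K
    · have hW := (hU z hzK).inter (hU ξ hξ)
      refine (dif_pos hzK).trans <| eqOn_of_eqOn_diff_of_dense_compl hKd hW
        ((hH z hzK).continuousOn.mono inter_subset_left)
        ((hH ξ hξ).continuousOn.mono inter_subset_right)
        (fun w hw => (hHf z hzK ⟨hw.1.1, hw.2⟩).trans (hHf ξ hξ ⟨hw.1.2, hw.2⟩).symm)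
        ⟨hξU z hzK, hz⟩
    · exact (hF_off hzK).trans (hHf ξ hξ ⟨hz, hzK⟩).symm
  refine ⟨F, fun z => ?_, hF_off⟩
  by_cases hzK : z ∈ K
  · have hUz := (hU z hzK).mem_nhds (hξU z hzK)
    exact ((hH z hzK).differentiableAt hUz).congr_of_eventuallyEq
      (Filter.eventuallyEq_of_mem hUz (hF_near z hzK))
  · have hKz := hK.isOpen_compl.mem_nhds hzK
    exact (hf.differentiableAt hKz).congr_of_eventuallyEq (Filter.eventuallyEq_of_mem hKz hF_off)

end Gluing

theorem eq_zero_of_resolvent_apply_extends {E : Type*} [NormedAddCommGroup E] [NormedSpace ℂ E]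
    [CompleteSpace E] {T : E →L[ℂ] E} {x : E} {K : Set ℂ}
    (hK : IsCompact K) (hKd : Dense Kᶜ) (hσ : spectrum ℂ T ⊆ K)
    (hext : ∀ ξ ∈ K, ∃ U : Set ℂ, IsOpen U ∧ ξ ∈ U ∧
      ∃ H : ℂ → E, DifferentiableOn ℂ H U ∧ EqOn H (fun z => resolvent T z x) (U \ K)) :
    x = 0 := by
  have hρ (z : ℂ) (hz : z ∉ K) : z ∈ resolventSet ℂ T := not_not.mp fun h => hz (hσ h)
  have hf : DifferentiableOn ℂ (fun z => resolvent T z x) Kᶜ := fun z hz =>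
    ((spectrum.hasDerivAt_resolvent_const_left (hρ z hz)).differentiableAt.clm_apply
      (differentiableAt_const x)).differentiableWithinAt
  obtain ⟨F, hF, hFf⟩ :=
    exists_differentiable_eqOn_compl_of_local_extensions hK.isClosed hKd hf hext
  have hF_tendsto : Filter.Tendsto F (Filter.cocompact ℂ) (nhds 0) := by
    rw [← Metric.cobounded_eq_cocompact]
    have hr := ((ContinuousLinearMap.apply ℂ E x).continuous.tendsto 0).comp
      (spectrum.resolvent_tendsto_cobounded (𝕜 := ℂ) T)
    refine (map_zero (ContinuousLinearMap.apply ℂ E x) ▸ hr).congr' ?_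
    exact Filter.eventuallyEq_of_mem (Bornology.isBounded_def.mp hK.isBounded)
      fun z hz => (hFf hz).symm
  obtain ⟨z, hz⟩ := hKd.nonempty
  have hu : IsUnit (algebraMap ℂ (E →L[ℂ] E) z - T) := hρ z hz
  calc x = (algebraMap ℂ (E →L[ℂ] E) z - T) (resolvent T z x) := by
        rw [← mul_apply_eq_comp, resolvent, Ring.mul_inverse_cancel _ hu, one_apply_eq_self]
    _ = (algebraMap ℂ (E →L[ℂ] E) z - T) (F z) := congrArg _ (hFf hz).symm
    _ = 0 := by rw [hF.apply_eq_of_tendsto_cocompact z hF_tendsto, map_zero]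

/-- If `g ∈ BC(ℝ, X)` has empty circular spectrum then `g = 0`. -/
theorem eq_zero_of_circularSpectrum_empty {X : Type*} [NormedAddCommGroup X] [NormedSpace ℂ X] [CompleteSpace X]
    (g : ℝ →ᵇ X) (h : circularSpectrum g = ∅) : g = 0 := by
  refine eq_zero_of_resolvent_apply_extends (isCompact_sphere 0 1)
    (interior_eq_empty_iff_dense_compl.mp (interior_sphere' 0 1))
    (spectrum_transOp_subset_sphere X) fun ξ hξ => ?_
  have hξg : ξ ∉ circularSpectrum g := h ▸ notMem_empty ξ
  obtain ⟨U, hU, hξU, H, hH, hHg⟩ :=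
    not_not.mp (not_and.mp hξg (mem_sphere_zero_iff_norm.mp hξ))
  exact ⟨U, hU, hξU, H, hH.differentiableOn,
    fun z hz => hHg z hz.1 (mt mem_sphere_zero_iff_norm.mpr hz.2)⟩
end
end

section
/- Let (U(t,s))_{t≥s} be a 1-periodic evolutionary process on a complex Banach space X with monodromy operators M(t) = U(t,t−1) and M = M(0). If λ ∈ ρ(M) and λ ≠ 0, then λ ∈ ρ(M(t)) for every t ∈ ℝ and the resolvent is strongly continuous in t: for every x ∈ X the map t ↦ R(λ, M(t))x = (λI − M(t))⁻¹x is continuous on ℝ. -/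
open Set MeasureTheory intervalIntegral
open scoped BoundedContinuousFunction ZeroAtInfty

noncomputable section

/-- `U` is an evolutionary process on `X` with bound `‖U(t,s)‖ ≤ N e^{ω (t-s)}`. -/
def IsEvolutionaryProcess {X : Type*} [NormedAddCommGroup X] [NormedSpace ℂ X]
    (U : ℝ → ℝ → (X →L[ℂ] X)) (N ω : ℝ) : Prop :=
  (∀ t : ℝ, U t t = 1) ∧
  (∀ t s r : ℝ, r ≤ s → s ≤ t → (U t s).comp (U s r) = U t r) ∧
  (∀ x : X, ContinuousOn (fun p : ℝ × ℝ => U p.1 p.2 x) {p : ℝ × ℝ | p.2 ≤ p.1}) ∧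
  0 < N ∧ 0 < ω ∧ (∀ t s : ℝ, s ≤ t → ‖U t s‖ ≤ N * Real.exp (ω * (t - s)))

/-- The evolutionary process `U` is `1`-periodic: `U(t+1, s+1) = U(t, s)`. -/
def IsOnePeriodicProcess {X : Type*} [NormedAddCommGroup X] [NormedSpace ℂ X]
    (U : ℝ → ℝ → (X →L[ℂ] X)) : Prop :=
  ∀ t s : ℝ, s ≤ t → U (t + 1) (s + 1) = U t s


/-! For `s ≤ t ≤ s + 1` the cocycle law and periodicity factor `M(t) = A B` and `M(s) = B A`
with `A = U(t, s)` and `B = U(s, t - 1)`. For `λ ≠ 0`, Jacobson's lemma then carries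
`λ ∈ ρ(M(s))` over to `λ ∈ ρ(M(t))`, with `R(λ, M(t)) = λ⁻¹ (1 + A R(λ, M(s)) B)`. Starting from
`M(⌊t⌋) = M(0)` this gives the first claim. Fixing `s` and letting `t` run over `[s, s + 1]`, the
right-hand side is strongly continuous, because `U` is strongly continuous and bounded on
`{(t, s) : s ≤ t ≤ s + 1}`. -/

open Filter Topology

theorem mem_resolventSet_mul_comm_of_ne_zero {𝕜 A : Type*} [Field 𝕜] [Ring A] [Algebra 𝕜 A]
    {a b : A} {k : 𝕜} (hk : k ≠ 0) (h : k ∈ resolventSet 𝕜 (b * a)) :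
    k ∈ resolventSet 𝕜 (a * b) :=
  Classical.byContradiction fun hab => (spectrum.unit_mem_mul_comm (r := Units.mk0 k hk)).1 hab h

theorem resolvent_mul_comm_of_ne_zero {𝕜 A : Type*} [Field 𝕜] [Ring A] [Algebra 𝕜 A]
    {a b : A} {k : 𝕜} (hk : k ≠ 0) (h : k ∈ resolventSet 𝕜 (b * a)) :
    resolvent (a * b) k = k⁻¹ • (1 + a * resolvent (b * a) k * b) := by
  have hc : (algebraMap 𝕜 A k - b * a) * resolvent (b * a) k = 1 := Ring.mul_inverse_cancel _ h
  have hprod : (algebraMap 𝕜 A k - a * b) * (1 + a * resolvent (b * a) k * b) = algebraMap 𝕜 A k :=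
    calc _ = algebraMap 𝕜 A k - a * b
          + a * ((algebraMap 𝕜 A k - b * a) * resolvent (b * a) k) * b := by
          simp only [mul_add, sub_mul, mul_sub, mul_one, ← mul_assoc, Algebra.commutes k a]
      _ = algebraMap 𝕜 A k := by rw [hc]; noncomm_ring
  rw [resolvent, ← mul_one (Ring.inverse _)]
  refine (Ring.inverse_mul_eq_iff_eq_mul _ 1 _ (mem_resolventSet_mul_comm_of_ne_zero hk h)).2 ?_
  rw [mul_smul_comm, hprod, Algebra.algebraMap_eq_smul_one, smul_smul, inv_mul_cancel₀ hk,
    one_smul]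

theorem ContinuousOn.clm_apply_of_norm_le {α 𝕜 E F : Type*} [TopologicalSpace α]
    [NontriviallyNormedField 𝕜] [SeminormedAddCommGroup E] [NormedSpace 𝕜 E]
    [SeminormedAddCommGroup F] [NormedSpace 𝕜 F] {T : α → E →L[𝕜] F} {f : α → E} {S : Set α}
    {C : ℝ} (hT : ∀ x, ContinuousOn (fun t => T t x) S) (hC : ∀ t ∈ S, ‖T t‖ ≤ C)
    (hf : ContinuousOn f S) : ContinuousOn (fun t => T t (f t)) S := by
  intro t₀ ht₀
  have hsmall : Tendsto (fun t => T t (f t - f t₀)) (𝓝[S] t₀) (𝓝 0) := by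
    refine squeeze_zero_norm' ?_ (by simpa using ((hf t₀ ht₀).sub_const (f t₀)).norm.const_mul C)
    filter_upwards [self_mem_nhdsWithin] with t ht
    exact (T t).le_of_opNorm_le (hC t ht) _
  simpa [ContinuousWithinAt] using hsmall.add (hT (f t₀) t₀ ht₀)

def monodromy {X : Type*} [NormedAddCommGroup X] [NormedSpace ℂ X]
    (U : ℝ → ℝ → (X →L[ℂ] X)) (t : ℝ) : X →L[ℂ] X :=
  U t (t - 1)

section

variable {X : Type*} [NormedAddCommGroup X] [NormedSpace ℂ X] {U : ℝ → ℝ → (X →L[ℂ] X)}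
  {N ω : ℝ}

theorem IsOnePeriodicProcess.periodic_monodromy (hper : IsOnePeriodicProcess U) :
    Function.Periodic (monodromy U) 1 := fun t => by
  simpa [monodromy] using hper t (t - 1) (by linarith)

namespace IsEvolutionaryProcess

theorem monodromy_eq_mul (hU : IsEvolutionaryProcess U N ω) {s t : ℝ} (hst : s ≤ t)
    (hts : t ≤ s + 1) : monodromy U t = U t s * U s (t - 1) :=
  (hU.2.1 t s (t - 1) (by linarith) hst).symm

theorem mul_eq_monodromy (hU : IsEvolutionaryProcess U N ω) (hper : IsOnePeriodicProcess U)
    {s t : ℝ} (hst : s ≤ t) (hts : t ≤ s + 1) : U s (t - 1) * U t s = monodromy U s := by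
  have hshift : U t s = U (t - 1) (s - 1) := by simpa using hper (t - 1) (s - 1) (by linarith)
  rw [hshift]
  exact hU.2.1 s (t - 1) (s - 1) (by linarith) (by linarith)

theorem mem_resolventSet_monodromy_of_le (hU : IsEvolutionaryProcess U N ω)
    (hper : IsOnePeriodicProcess U) {lam : ℂ} (hlam0 : lam ≠ 0) {s t : ℝ}
    (hs : lam ∈ resolventSet ℂ (monodromy U s)) (hst : s ≤ t) (hts : t ≤ s + 1) :
    lam ∈ resolventSet ℂ (monodromy U t) := by
  rw [← hU.mul_eq_monodromy hper hst hts] at hs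
  rw [hU.monodromy_eq_mul hst hts]
  exact mem_resolventSet_mul_comm_of_ne_zero hlam0 hs

theorem resolvent_monodromy_eq (hU : IsEvolutionaryProcess U N ω)
    (hper : IsOnePeriodicProcess U) {lam : ℂ} (hlam0 : lam ≠ 0) {s t : ℝ}
    (hs : lam ∈ resolventSet ℂ (monodromy U s)) (hst : s ≤ t) (hts : t ≤ s + 1) :
    resolvent (monodromy U t) lam
      = lam⁻¹ • (1 + U t s * resolvent (monodromy U s) lam * U s (t - 1)) := by
  rw [← hU.mul_eq_monodromy hper hst hts] at hs ⊢
  rw [hU.monodromy_eq_mul hst hts]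
  exact resolvent_mul_comm_of_ne_zero hlam0 hs

theorem mem_resolventSet_monodromy (hU : IsEvolutionaryProcess U N ω)
    (hper : IsOnePeriodicProcess U) {lam : ℂ} (hlam0 : lam ≠ 0)
    (hlam : lam ∈ resolventSet ℂ (monodromy U 0)) (t : ℝ) :
    lam ∈ resolventSet ℂ (monodromy U t) := by
  have hfloor : monodromy U ⌊t⌋ = monodromy U 0 := by
    simpa using hper.periodic_monodromy.int_mul_eq ⌊t⌋
  refine hU.mem_resolventSet_monodromy_of_le hper hlam0 (hfloor ▸ hlam) (Int.floor_le t) ?_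
  exact (Int.lt_floor_add_one t).le

theorem continuousOn_apply_left (hU : IsEvolutionaryProcess U N ω) (s : ℝ) (x : X) :
    ContinuousOn (fun t => U t s x) (Ici s) :=
  (hU.2.2.1 x).comp (f := fun t => (t, s)) (by fun_prop) fun _ ht => ht

theorem continuousOn_apply_right (hU : IsEvolutionaryProcess U N ω) (t : ℝ) (x : X) :
    ContinuousOn (fun s => U t s x) (Iic t) :=
  (hU.2.2.1 x).comp (f := fun s => (t, s)) (by fun_prop) fun _ hs => hs

theorem norm_le_of_le_add_one (hU : IsEvolutionaryProcess U N ω) {s t : ℝ} (hst : s ≤ t)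
    (hts : t ≤ s + 1) : ‖U t s‖ ≤ N * Real.exp ω := by
  refine (hU.2.2.2.2.2 t s hst).trans ?_
  gcongr
  · exact hU.2.2.2.1.le
  · exact mul_le_of_le_one_right hU.2.2.2.2.1.le (by linarith)

theorem continuousOn_resolvent_monodromy_apply (hU : IsEvolutionaryProcess U N ω)
    (hper : IsOnePeriodicProcess U) {lam : ℂ} (hlam0 : lam ≠ 0) {s : ℝ}
    (hs : lam ∈ resolventSet ℂ (monodromy U s)) (x : X) :
    ContinuousOn (fun t => resolvent (monodromy U t) lam x) (Icc s (s + 1)) := by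
  have hinner : ContinuousOn (fun t => U s (t - 1) x) (Icc s (s + 1)) :=
    (hU.continuousOn_apply_right s x).comp (by fun_prop) fun t ht => by
      simp only [mem_Iic]; linarith [ht.2]
  have houter : ContinuousOn (fun t => U t s (resolvent (monodromy U s) lam (U s (t - 1) x)))
      (Icc s (s + 1)) :=
    ContinuousOn.clm_apply_of_norm_le
      (fun y => (hU.continuousOn_apply_left s y).mono Icc_subset_Ici_self)
      (fun t ht => hU.norm_le_of_le_add_one ht.1 ht.2)
      ((resolvent (monodromy U s) lam).continuous.comp_continuousOn hinner)
  refine (((continuousOn_const (c := x)).add houter).const_smul lam⁻¹).congr fun t ht => ?_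
  simp [hU.resolvent_monodromy_eq hper hlam0 hs ht.1 ht.2]

end IsEvolutionaryProcess

end

theorem resolvent_monodromy_strongly_continuous_general {X : Type*} [NormedAddCommGroup X] [NormedSpace ℂ X]
    (U : ℝ → ℝ → (X →L[ℂ] X)) (N ω : ℝ)
    (hU : IsEvolutionaryProcess U N ω) (hper : IsOnePeriodicProcess U)
    (lam : ℂ) (hlam : lam ∈ resolventSet ℂ (U 0 (-1))) (hlam0 : lam ≠ 0) :
    (∀ t : ℝ, lam ∈ resolventSet ℂ (U t (t - 1))) ∧
    (∀ x : X, Continuous fun t : ℝ => resolvent (U t (t - 1)) lam x) := by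
  have hρ : ∀ t, lam ∈ resolventSet ℂ (monodromy U t) :=
    hU.mem_resolventSet_monodromy hper hlam0 (by simpa [monodromy] using hlam)
  refine ⟨hρ, fun x => continuous_iff_continuousAt.2 fun t => ?_⟩
  exact (hU.continuousOn_resolvent_monodromy_apply hper hlam0 (hρ (t - 1 / 2)) x).continuousAt
    (Icc_mem_nhds (by linarith) (by linarith))

/-- For a `1`-periodic evolutionary process, if `λ ∈ ρ(M)` and `λ ≠ 0`, then
`λ ∈ ρ(M(t))` for each `t`, and the resolvent `t ↦ R(λ, M(t)) x` is strongly continuous. -/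
theorem resolvent_monodromy_strongly_continuous {X : Type*} [NormedAddCommGroup X] [NormedSpace ℂ X] [CompleteSpace X]
    (U : ℝ → ℝ → (X →L[ℂ] X)) (N ω : ℝ)
    (hU : IsEvolutionaryProcess U N ω) (hper : IsOnePeriodicProcess U)
    (lam : ℂ) (hlam : lam ∈ resolventSet ℂ (U 0 (-1))) (hlam0 : lam ≠ 0) :
    (∀ t : ℝ, lam ∈ resolventSet ℂ (U t (t - 1))) ∧
    (∀ x : X, Continuous fun t : ℝ => resolvent (U t (t - 1)) lam x) :=
  resolvent_monodromy_strongly_continuous_general U N ω hU hper lam hlam hlam0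
end
end

section
/- Let (U(t,s))_{t≥s} be a 1-periodic evolutionary process on a complex Banach space X with monodromy operators M(t) = U(t,t−1) and M = M(0). Then the multiplication operator 𝓜 on BC(ℝ,X) defined by (𝓜g)(t) := M(t)g(t) is a well-defined bounded linear operator, and σ(𝓜) \ {0} ⊂ σ(M) \ {0}. -/
open Set MeasureTheory intervalIntegral
open scoped BoundedContinuousFunction ZeroAtInfty

noncomputable section

/-!
For `n = ⌊t⌋`, periodicity factors the monodromy operator as `M(t) = A B` with `A = U(t, n)`,
`B = U(n + 1, t)` and `B A = U(n + 1, n) = M`. Jacobson's identity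
`(μ - A B)⁻¹ = μ⁻¹ (1 + A (μ - B A)⁻¹ B)` shows that for `μ ∈ ρ(M) \ {0}` every `μ - M(t)` is
invertible, with inverses bounded uniformly in `t` because `‖U(t, s)‖ ≤ N e^ω` for `0 ≤ t - s ≤ 1`.
By the resolvent identity these inverses are strongly continuous, so multiplication by them is a
bounded operator on `BC(ℝ, X)`, and it inverts `μ - 𝓜`.
-/

open Filter Topology

section Jacobson

variable {𝕜 A : Type*}

theorem resolvent_mul_comm [Field 𝕜] [Ring A] [Algebra 𝕜 A] {a b : A} {μ : 𝕜} (hμ : μ ≠ 0)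
    (h : μ ∈ resolventSet 𝕜 (b * a)) :
    resolvent (a * b) μ = μ⁻¹ • (1 + a * resolvent (b * a) μ * b) := by
  set R := resolvent (b * a) μ
  set z := algebraMap 𝕜 A μ
  have hunit : IsUnit (z - b * a) := spectrum.mem_resolventSet_iff.mp h
  have hRl : R * (z - b * a) = 1 := Ring.inverse_mul_cancel _ hunit
  have hRr : (z - b * a) * R = 1 := Ring.mul_inverse_cancel _ hunit
  have hza : z * a = a * z := Algebra.commutes μ a
  have hzb : b * z = z * b := (Algebra.commutes μ b).symm
  have hz : μ⁻¹ • z = 1 := by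
    simp only [z, Algebra.algebraMap_eq_smul_one, smul_smul, inv_mul_cancel₀ hμ, one_smul]
  have hright : (z - a * b) * (1 + a * R * b) = z := calc
    _ = z - a * b + z * a * R * b - a * b * a * R * b := by noncomm_ring
    _ = z - a * b + a * ((z - b * a) * R) * b := by rw [hza]; noncomm_ring
    _ = z := by rw [hRr]; noncomm_ring
  have hleft : (1 + a * R * b) * (z - a * b) = z := calc
    _ = z - a * b + a * R * (b * z) - a * R * b * a * b := by noncomm_ring
    _ = z - a * b + a * (R * (z - b * a)) * b := by rw [hzb]; noncomm_ring
    _ = z := by rw [hRl]; noncomm_ring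
  let u : Aˣ := ⟨z - a * b, μ⁻¹ • (1 + a * R * b), by rw [mul_smul_comm, hright, hz],
    by rw [smul_mul_assoc, hleft, hz]⟩
  exact Ring.inverse_unit u

theorem mem_resolventSet_mul_comm [Field 𝕜] [Ring A] [Algebra 𝕜 A] {a b : A}
    {μ : 𝕜} (hμ : μ ≠ 0) (h : μ ∈ resolventSet 𝕜 (b * a)) : μ ∈ resolventSet 𝕜 (a * b) :=
  not_not.mp fun hab => spectrum.unit_mem_mul_comm (r := Units.mk0 μ hμ) |>.mp hab h

theorem norm_resolvent_mul_comm_le [NontriviallyNormedField 𝕜] [NormedRing A]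
    [NormedAlgebra 𝕜 A] {a b : A} {μ : 𝕜} (hμ : μ ≠ 0) (h : μ ∈ resolventSet 𝕜 (b * a)) :
    ‖resolvent (a * b) μ‖ ≤ ‖μ‖⁻¹ * (‖(1 : A)‖ + ‖a‖ * ‖resolvent (b * a) μ‖ * ‖b‖) := by
  rw [resolvent_mul_comm hμ h]
  refine (norm_smul_le _ _).trans ?_
  rw [norm_inv]
  gcongr
  refine (norm_add_le _ _).trans ?_
  gcongr
  exact (norm_mul_le _ _).trans (by gcongr; exact norm_mul_le _ _)

end Jacobson

section Pointwise

variable {α 𝕜 E F : Type*} [TopologicalSpace α] [NontriviallyNormedField 𝕜]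
  [NormedAddCommGroup E] [NormedSpace 𝕜 E] [NormedAddCommGroup F] [NormedSpace 𝕜 F]

theorem continuous_apply_of_norm_le {T : α → E →L[𝕜] F} {C : ℝ}
    (hT : ∀ x, Continuous fun t => T t x) (hC : ∀ t, ‖T t‖ ≤ C) {g : α → E} (hg : Continuous g) :
    Continuous fun t => T t (g t) := by
  refine continuous_iff_continuousAt.mpr fun t₀ => ?_
  rw [ContinuousAt, tendsto_iff_norm_sub_tendsto_zero]
  have hbound : ∀ t, ‖T t (g t) - T t₀ (g t₀)‖ ≤
      C * ‖g t - g t₀‖ + ‖T t (g t₀) - T t₀ (g t₀)‖ := fun t => calc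
    _ = ‖T t (g t - g t₀) + (T t (g t₀) - T t₀ (g t₀))‖ := by rw [map_sub]; abel_nf
    _ ≤ _ := (norm_add_le _ _).trans (by gcongr; exact (T t).le_of_opNorm_le (hC t) _)
  have hlim : Tendsto (fun t => C * ‖g t - g t₀‖ + ‖T t (g t₀) - T t₀ (g t₀)‖) (𝓝 t₀) (𝓝 0) :=
    (((hg.sub continuous_const).norm.const_mul C).add
      ((hT (g t₀)).sub continuous_const).norm).tendsto' t₀ 0 (by simp)
  exact squeeze_zero (fun _ => norm_nonneg _) hbound hlim

def pointwiseCLM (T : α → E →L[𝕜] F) (hT : ∀ x, Continuous fun t => T t x) {C : ℝ}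
    (hC : ∀ t, ‖T t‖ ≤ C) : (α →ᵇ E) →L[𝕜] (α →ᵇ F) :=
  have hbound (g : α →ᵇ E) (t : α) : ‖T t (g t)‖ ≤ max C 0 * ‖g‖ :=
    (T t).le_of_opNorm_le_of_le (le_max_of_le_left (hC t)) (g.norm_coe_le_norm t)
  LinearMap.mkContinuous
    { toFun := fun g => .ofNormedAddCommGroup (fun t => T t (g t))
        (continuous_apply_of_norm_le hT hC g.continuous) _ (hbound g)
      map_add' := fun g h => by ext t; simp
      map_smul' := fun c g => by ext t; simp }
    (max C 0) fun g => BoundedContinuousFunction.norm_ofNormedAddCommGroup_le _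
      (mul_nonneg (le_max_right _ _) (norm_nonneg _)) (hbound g)

@[simp]
theorem pointwiseCLM_apply (T : α → E →L[𝕜] F) (hT : ∀ x, Continuous fun t => T t x) {C : ℝ}
    (hC : ∀ t, ‖T t‖ ≤ C) (g : α →ᵇ E) (t : α) : pointwiseCLM T hT hC g t = T t (g t) :=
  rfl

theorem continuous_apply_of_mul_eq_one {T R : α → E →L[𝕜] E} {D : ℝ}
    (hT : ∀ x, Continuous fun t => T t x) (hD : ∀ t, ‖R t‖ ≤ D)
    (hl : ∀ t, R t * T t = 1) (hr : ∀ t, T t * R t = 1) (x : E) :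
    Continuous fun t => R t x := by
  refine continuous_iff_continuousAt.mpr fun s => ?_
  rw [ContinuousAt, tendsto_iff_norm_sub_tendsto_zero]
  -- the resolvent identity `R t - R s = R t (T s - T t) R s`
  have hres : ∀ t, R t x - R s x = R t (T s (R s x) - T t (R s x)) := fun t => by
    have hs := DFunLike.congr_fun (hr s) x
    have ht := DFunLike.congr_fun (hl t) (R s x)
    simp only [mul_apply_eq_comp, one_apply_eq_self] at hs ht
    rw [map_sub, hs, ht]
  have hbound : ∀ t, ‖R t x - R s x‖ ≤ D * ‖T s (R s x) - T t (R s x)‖ := fun t => by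
    rw [hres]; exact (R t).le_of_opNorm_le (hD t) _
  have hlim : Tendsto (fun t => D * ‖T s (R s x) - T t (R s x)‖) (𝓝 s) (𝓝 0) :=
    ((continuous_const.sub (hT (R s x))).norm.const_mul D).tendsto' s 0 (by simp)
  exact squeeze_zero (fun _ => norm_nonneg _) hbound hlim

theorem notMem_spectrum_pointwiseCLM {T : α → E →L[𝕜] E} (hT : ∀ x, Continuous fun t => T t x)
    {C : ℝ} (hC : ∀ t, ‖T t‖ ≤ C) {μ : 𝕜} {D : ℝ} (hμ : ∀ t, μ ∈ resolventSet 𝕜 (T t))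
    (hD : ∀ t, ‖resolvent (T t) μ‖ ≤ D) : μ ∉ spectrum 𝕜 (pointwiseCLM T hT hC) := by
  have hunit : ∀ t, IsUnit (algebraMap 𝕜 _ μ - T t) :=
    fun t => spectrum.mem_resolventSet_iff.mp (hμ t)
  have hl : ∀ t, resolvent (T t) μ * (algebraMap 𝕜 _ μ - T t) = 1 :=
    fun t => Ring.inverse_mul_cancel _ (hunit t)
  have hr : ∀ t, (algebraMap 𝕜 _ μ - T t) * resolvent (T t) μ = 1 :=
    fun t => Ring.mul_inverse_cancel _ (hunit t)
  have hTμ : ∀ x, Continuous fun t => (algebraMap 𝕜 _ μ - T t) x := fun x => by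
    simp only [sub_apply, ContinuousLinearMap.algebraMap_apply]
    exact continuous_const.sub (hT x)
  have hR := continuous_apply_of_mul_eq_one hTμ hD hl hr
  refine not_not.mpr (spectrum.mem_resolventSet_of_left_right_inverse
    (b := pointwiseCLM _ hR hD) (c := pointwiseCLM _ hR hD) ?_ ?_)
  · ext g t
    simpa using DFunLike.congr_fun (hr t) (g t)
  · ext g t
    simpa using DFunLike.congr_fun (hl t) (g t)

end Pointwise

section Monodromy

variable {X : Type*} [NormedAddCommGroup X] [NormedSpace ℂ X] {U : ℝ → ℝ → X →L[ℂ] X} {N ω : ℝ}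

theorem IsEvolutionaryProcess.norm_le_of_le_add_one_s14 (hU : IsEvolutionaryProcess U N ω) {t s : ℝ}
    (hst : s ≤ t) (hts : t ≤ s + 1) : ‖U t s‖ ≤ N * Real.exp ω := by
  obtain ⟨-, -, -, hN, hω, hbound⟩ := hU
  refine (hbound t s hst).trans ?_
  gcongr
  nlinarith

theorem IsEvolutionaryProcess.continuous_monodromy_apply (hU : IsEvolutionaryProcess U N ω)
    (x : X) : Continuous fun t => U t (t - 1) x := by
  have hdiag : Continuous fun t : ℝ => (t, t - 1) := by fun_prop
  exact (hU.2.2.1 x).comp_continuous hdiag fun t => by simp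

theorem IsOnePeriodicProcess.apply_add_int (hper : IsOnePeriodicProcess U) {t s : ℝ} (hst : s ≤ t)
    (k : ℤ) : U (t + k) (s + k) = U t s := by
  induction k using Int.induction_on with
  | zero => simp
  | succ k ih =>
    push_cast at ih ⊢
    rw [← add_assoc, ← add_assoc, hper _ _ (by linarith), ih]
  | pred k ih =>
    rw [← ih, ← hper _ _ (by push_cast; linarith)]
    push_cast
    ring_nf

theorem monodromy_eq_mul (hU : IsEvolutionaryProcess U N ω) (hper : IsOnePeriodicProcess U)
    {n t : ℝ} (hn : n ≤ t) (ht : t ≤ n + 1) :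
    U t (t - 1) = U t n * U (n + 1) t := by
  calc U t (t - 1) = U t n * U n (t - 1) := (hU.2.1 t n (t - 1) (by linarith) hn).symm
    _ = U t n * U (n + 1) t := by rw [← hper n (t - 1) (by linarith), sub_add_cancel]

theorem mul_eq_monodromy (hU : IsEvolutionaryProcess U N ω) (hper : IsOnePeriodicProcess U)
    (k : ℤ) {t : ℝ} (hk : k ≤ t) (ht : t ≤ k + 1) :
    U (k + 1) t * U t k = U 0 (-1) := by
  have hshift := hper.apply_add_int (t := 0) (s := -1) (by norm_num) (k + 1)
  rw [show (0 : ℝ) + ↑(k + 1) = k + 1 by push_cast; ring,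
    show (-1 : ℝ) + ↑(k + 1) = k by push_cast; ring] at hshift
  rw [← hshift]
  exact hU.2.1 _ t k hk ht

theorem mem_resolventSet_and_norm_resolvent_monodromy_le (hU : IsEvolutionaryProcess U N ω)
    (hper : IsOnePeriodicProcess U) {μ : ℂ} (hμ : μ ≠ 0)
    (hM : μ ∈ resolventSet ℂ (U 0 (-1))) (t : ℝ) :
    μ ∈ resolventSet ℂ (U t (t - 1)) ∧ ‖resolvent (U t (t - 1)) μ‖ ≤
      ‖μ‖⁻¹ *
        (‖(1 : X →L[ℂ] X)‖ + N * Real.exp ω * ‖resolvent (U 0 (-1)) μ‖ * (N * Real.exp ω)) := by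
  have hfloor : (⌊t⌋ : ℝ) ≤ t := Int.floor_le t
  have hceil : t ≤ ⌊t⌋ + 1 := (Int.lt_floor_add_one t).le
  rw [← mul_eq_monodromy hU hper ⌊t⌋ hfloor hceil] at hM ⊢
  rw [monodromy_eq_mul hU hper hfloor hceil]
  refine ⟨mem_resolventSet_mul_comm hμ hM, (norm_resolvent_mul_comm_le hμ hM).trans ?_⟩
  have hA : ‖U t ⌊t⌋‖ ≤ N * Real.exp ω := hU.norm_le_of_le_add_one_s14 hfloor (by linarith)
  have hB : ‖U (⌊t⌋ + 1) t‖ ≤ N * Real.exp ω := hU.norm_le_of_le_add_one_s14 hceil (by linarith)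
  have hK : 0 ≤ N * Real.exp ω := (norm_nonneg _).trans hA
  gcongr

end Monodromy

theorem multiplication_by_monodromy_general {X : Type*} [NormedAddCommGroup X] [NormedSpace ℂ X]
    (U : ℝ → ℝ → (X →L[ℂ] X)) (N ω : ℝ)
    (hU : IsEvolutionaryProcess U N ω) (hper : IsOnePeriodicProcess U) :
    ∃ Mop : (ℝ →ᵇ X) →L[ℂ] (ℝ →ᵇ X),
      (∀ (g : ℝ →ᵇ X) (t : ℝ), Mop g t = U t (t - 1) (g t)) ∧
      spectrum ℂ Mop \ {0} ⊆ spectrum ℂ (U 0 (-1)) \ {0} := by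
  refine ⟨pointwiseCLM (fun t => U t (t - 1)) hU.continuous_monodromy_apply
    (fun t => hU.norm_le_of_le_add_one_s14 (by linarith) (by linarith)), fun _ _ => rfl, ?_⟩
  rintro μ ⟨hμσ, hμ0⟩
  refine ⟨fun hM => ?_, hμ0⟩
  have hresolvent := mem_resolventSet_and_norm_resolvent_monodromy_le hU hper hμ0 hM
  exact notMem_spectrum_pointwiseCLM _ _ (fun t => (hresolvent t).1) (fun t => (hresolvent t).2) hμσ

/-- The multiplication operator `(𝓜 g)(t) = M(t) g(t)` by the monodromy operators is a
well-defined bounded linear operator on `BC(ℝ, X)` and `σ(𝓜) \ {0} ⊆ σ(M) \ {0}`. -/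
theorem multiplication_by_monodromy {X : Type*} [NormedAddCommGroup X] [NormedSpace ℂ X] [CompleteSpace X]
    (U : ℝ → ℝ → (X →L[ℂ] X)) (N ω : ℝ)
    (hU : IsEvolutionaryProcess U N ω) (hper : IsOnePeriodicProcess U) :
    ∃ Mop : (ℝ →ᵇ X) →L[ℂ] (ℝ →ᵇ X),
      (∀ (g : ℝ →ᵇ X) (t : ℝ), Mop g t = U t (t - 1) (g t)) ∧
      spectrum ℂ Mop \ {0} ⊆ spectrum ℂ (U 0 (-1)) \ {0} :=
  multiplication_by_monodromy_general U N ω hU hper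
end
end
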